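/- arXiv:2403.14087 — 3 statements merged into one kernel-verified Lean document; each statement's English description precedes it below -/
import Mathlib

section
/- Let m be a real number with m > e^e, and set γ = (ln ln m)/(ln m). Then γ^{2/γ} · m < 1. -/
/-! Write `L = ln m` and `l = ln L`, so `γ = l / L` and `ln γ = ln l - l`. Then
`ln (γ^(2/γ) · m) = (2L/l)(ln l - l) + L = L (2 ln l - l) / l`, which is negative because
`2 ln l ≤ 2l/e < l`. -/

open Real

lemma Real.log_le_div_exp_one {x : ℝ} (hx : 0 < x) : log x ≤ x / exp 1 := by
  have h := log_le_sub_one_of_pos (div_pos hx (exp_pos 1))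
  rw [log_div hx.ne' (exp_pos 1).ne', log_exp] at h
  linarith

lemma Real.two_mul_log_lt_self {x : ℝ} (hx : 0 < x) : 2 * log x < x := by
  have hdiv : 2 * (x / exp 1) < x := by
    rw [mul_div_assoc', div_lt_iff₀ (exp_pos 1)]
    nlinarith [exp_one_gt_two]
  linarith [log_le_div_exp_one hx]

lemma Real.rpow_two_div_mul_exp_lt_one {L : ℝ} (hL : 1 < L) :
    (log L / L) ^ (2 / (log L / L)) * exp L < 1 := by
  have hL0 : 0 < L := one_pos.trans hL
  have hl : 0 < log L := log_pos hL
  have hexponent : (log (log L) - log L) * (2 / (log L / L)) + L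
      = L * (2 * log (log L) - log L) / log L := by
    field_simp
    ring
  rw [rpow_def_of_pos (div_pos hl hL0), ← exp_add, exp_lt_one_iff, log_div hl.ne' hL0.ne',
    hexponent]
  exact div_neg_of_neg_of_pos (mul_neg_of_pos_of_neg hL0 (by linarith [two_mul_log_lt_self hl])) hl

/-- For `m > e^e` and `γ = (ln ln m)/(ln m)`, we have `γ^(2/γ) · m < 1`. -/
theorem stmt_7 (m : ℝ) (hm : Real.exp (Real.exp 1) < m) :
    (Real.log (Real.log m) / Real.log m) ^
        ((2 : ℝ) / (Real.log (Real.log m) / Real.log m)) * m < 1 := by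
  have hm0 : 0 < m := (exp_pos _).trans hm
  have hlog : 1 < log m := by
    rw [lt_log_iff_exp_lt hm0]
    exact (exp_lt_exp.2 (one_lt_exp_iff.2 one_pos)).trans hm
  simpa only [exp_log hm0] using rpow_two_div_mul_exp_lt_one hlog
end

section
/- Let U be a finite set, let O_1, ..., O_k be subsets of U with |O_1 ∪ ... ∪ O_k| = opt, and let I_1, ..., I_k be independent random variables, each uniformly distributed on {1, ..., k}. Suppose S_1, ..., S_k are random subsets of U such that each S_j is a (deterministic) function of (I_1, ..., I_j) and satisfies |S_j \ C_{j−1}| ≥ |O_{I_j} \ C_{j−1}| pointwise, where C_j = S_1 ∪ ... ∪ S_j and C_0 = ∅. Then E[|S_1 ∪ ... ∪ S_k|] ≥ (1 − (1 − 1/k)^k) · opt. -/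
/-!
Write `C_n` for the union of the first `n` greedy choices and `opt - E|C_n|` for the expected
gap. Given `I_1, …, I_n`, the index `I_{n+1}` is still uniform, so the greedy step gains in
expectation at least `(1/k) Σ_i E|O_i \ C_n| ≥ (1/k) (opt - E|C_n|)`. Hence each step shrinks the
gap by a factor `1 - 1/k`, and after `k` steps it is at most `(1 - 1/k)^k · opt`.

Since the `I_j` are independent and uniform, every outcome `v : Fin k → Fin k` of `(I_1, …, I_k)`
has probability `k^{-k}`, so the expectation is a plain average over such `v`.
-/

open MeasureTheory Finset

theorem Fintype.sum_sum_update_eq_card_smul {ι β M : Type*} [DecidableEq ι] [Fintype ι]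
    [Fintype β] [AddCommMonoid M] (j : ι) (h : β → (ι → β) → M) :
    ∑ v : ι → β, ∑ b : β, h b (Function.update v j b) =
      Fintype.card β • ∑ v : ι → β, h (v j) v := by
  let σ : Equiv.Perm ((ι → β) × β) :=
    Function.Involutive.toPerm (fun p => (Function.update p.1 j p.2, p.1 j)) fun p => by simp
  calc ∑ v : ι → β, ∑ b : β, h b (Function.update v j b)
      = ∑ p, h ((σ p).1 j) (σ p).1 := by
        rw [← Fintype.sum_prod_type']
        refine Fintype.sum_congr _ _ fun p => ?_
        change _ = h (Function.update p.1 j p.2 j) (Function.update p.1 j p.2)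
        rw [Function.update_self]
    _ = ∑ p : (ι → β) × β, h (p.1 j) p.1 := Equiv.sum_comp σ fun p => h (p.1 j) p.1
    _ = Fintype.card β • ∑ v : ι → β, h (v j) v := by
      rw [Fintype.sum_prod_type, Finset.smul_sum]
      simp

theorem Finset.card_biUnion_le_sum_card_sdiff_add_card {ι α : Type*} [DecidableEq α]
    (s : Finset ι) (O : ι → Finset α) (C : Finset α) :
    #(s.biUnion O) ≤ ∑ i ∈ s, #(O i \ C) + #C := by
  have hcover : s.biUnion O \ C ⊆ s.biUnion fun i => O i \ C := by
    intro x
    simp only [mem_sdiff, mem_biUnion]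
    tauto
  calc #(s.biUnion O) ≤ #(s.biUnion O \ C) + #C := card_le_card_sdiff_add_card
    _ ≤ ∑ i ∈ s, #(O i \ C) + #C := by
      gcongr
      exact (card_le_card hcover).trans card_biUnion_le

theorem one_sub_pow_mul_le_of_sub_le_mul {q c : ℝ} (hq : 0 ≤ q) {b : ℕ → ℝ} (hb0 : b 0 = 0)
    {m : ℕ} (hstep : ∀ n < m, c - b (n + 1) ≤ q * (c - b n)) :
    (1 - q ^ m) * c ≤ b m := by
  have hgap : ∀ n ≤ m, c - b n ≤ q ^ n * c := by
    intro n hn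
    induction n with
    | zero => simp [hb0]
    | succ n ih =>
      calc c - b (n + 1) ≤ q * (c - b n) := hstep n hn
        _ ≤ q * (q ^ n * c) := mul_le_mul_of_nonneg_left (ih (by omega)) hq
        _ = q ^ (n + 1) * c := by ring
  linarith [hgap m le_rfl]

section PrefixUnion

variable {U : Type*} [DecidableEq U] {k : ℕ}

/-- `prefixUnion s n = s 0 ∪ ⋯ ∪ s (n-1)`, the set `C_n` of the paper's 1-based indexing. -/
def prefixUnion (s : Fin k → Finset U) (n : ℕ) : Finset U :=
  (univ.filter fun t : Fin k => (t : ℕ) < n).biUnion s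

theorem prefixUnion_zero (s : Fin k → Finset U) : prefixUnion s 0 = ∅ := by
  simp [prefixUnion]

theorem prefixUnion_self (s : Fin k → Finset U) : prefixUnion s k = univ.biUnion s := by
  simp [prefixUnion]

theorem filter_lt_biUnion_eq_prefixUnion (s : Fin k → Finset U) (j : Fin k) :
    (univ.filter fun t : Fin k => t < j).biUnion s = prefixUnion s j := by
  simp only [prefixUnion, Fin.lt_def]

theorem prefixUnion_succ (s : Fin k → Finset U) (j : Fin k) :
    prefixUnion s (j + 1) = s j ∪ prefixUnion s j := by
  have hfilter : (univ.filter fun t : Fin k => (t : ℕ) < j + 1) =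
      insert j (univ.filter fun t : Fin k => (t : ℕ) < j) := by
    ext t
    simp only [mem_filter, mem_insert, mem_univ, true_and, Fin.ext_iff]
    omega
  rw [prefixUnion, hfilter, biUnion_insert, prefixUnion]

theorem prefixUnion_congr {s s' : Fin k → Finset U} {n : ℕ}
    (h : ∀ t : Fin k, (t : ℕ) < n → s t = s' t) : prefixUnion s n = prefixUnion s' n :=
  biUnion_congr rfl fun t ht => h t (mem_filter.1 ht).2

end PrefixUnion

section Greedy

variable {U : Type*} [DecidableEq U] {k : ℕ} {O : Fin k → Finset U}
  {s : Fin k → (Fin k → Fin k) → Finset U}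

theorem prefixUnion_update (hdep : ∀ j v v', (∀ i ≤ j, v i = v' i) → s j v = s j v')
    {n : ℕ} {j : Fin k} (hj : n ≤ j) (v : Fin k → Fin k) (b : Fin k) :
    prefixUnion (fun t => s t (Function.update v j b)) n = prefixUnion (fun t => s t v) n :=
  prefixUnion_congr fun t ht => hdep t _ _ fun i hi =>
    Function.update_of_ne (Fin.ne_of_lt (lt_of_le_of_lt hi (by omega))) _ _

/-- With `B n = Σ_v |C_n v|` and `c = |⋃ O|`, this is `k^k c - B n ≤ k (B (n+1) - B n)`,
written without subtraction in `ℕ`. -/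
theorem pow_mul_card_add_mul_sum_le (hdep : ∀ j v v', (∀ i ≤ j, v i = v' i) → s j v = s j v')
    (hgreedy : ∀ (j : Fin k) v, #(O (v j) \ prefixUnion (fun t => s t v) j) ≤
      #(s j v \ prefixUnion (fun t => s t v) j))
    {n : ℕ} (hn : n < k) :
    k ^ k * #(univ.biUnion O) + k * ∑ v, #(prefixUnion (fun t => s t v) n) ≤
      k * ∑ v, #(prefixUnion (fun t => s t v) (n + 1)) +
        ∑ v, #(prefixUnion (fun t => s t v) n) := by
  set j : Fin k := ⟨n, hn⟩
  set C : (Fin k → Fin k) → Finset U := fun v => prefixUnion (fun t => s t v) n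
  have hgain : ∑ v, #(C v) + ∑ v, #(O (v j) \ C v) ≤
      ∑ v, #(prefixUnion (fun t => s t v) (n + 1)) := by
    rw [← sum_add_distrib]
    gcongr with v
    rw [prefixUnion_succ _ j, ← card_sdiff_add_card]
    linarith [hgreedy j v]
  have hexchange : ∑ v, ∑ i, #(O i \ C v) = k * ∑ v, #(O (v j) \ C v) := by
    calc ∑ v, ∑ i, #(O i \ C v) = ∑ v, ∑ i, #(O i \ C (Function.update v j i)) := by
          simp only [C, prefixUnion_update hdep (n := n) (j := j) le_rfl]
      _ = Fintype.card (Fin k) • ∑ v, #(O (v j) \ C v) :=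
          Fintype.sum_sum_update_eq_card_smul j fun i v => #(O i \ C v)
      _ = k * ∑ v, #(O (v j) \ C v) := by rw [Fintype.card_fin, smul_eq_mul]
  have hcover : k ^ k * #(univ.biUnion O) ≤ ∑ v, ∑ i, #(O i \ C v) + ∑ v, #(C v) := by
    rw [← sum_add_distrib]
    calc k ^ k * #(univ.biUnion O) = ∑ _v : Fin k → Fin k, #(univ.biUnion O) := by simp
      _ ≤ _ := sum_le_sum fun v _ => card_biUnion_le_sum_card_sdiff_add_card _ _ _
  have := Nat.mul_le_mul_left k hgain
  rw [mul_add] at this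
  simp only [C] at *
  omega

theorem one_sub_pow_mul_card_mul_pow_le_sum
    (hdep : ∀ j v v', (∀ i ≤ j, v i = v' i) → s j v = s j v')
    (hgreedy : ∀ (j : Fin k) v, #(O (v j) \ prefixUnion (fun t => s t v) j) ≤
      #(s j v \ prefixUnion (fun t => s t v) j)) :
    (1 - (1 - 1 / (k : ℝ)) ^ k) * (#(univ.biUnion O) * k ^ k) ≤
      ∑ v, (#(univ.biUnion fun j => s j v) : ℝ) := by
  set B : ℕ → ℝ := fun n => ∑ v, (#(prefixUnion (fun t => s t v) n) : ℝ)
  have hq : 0 ≤ 1 - 1 / (k : ℝ) := by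
    rw [sub_nonneg, one_div]
    exact Nat.cast_inv_le_one k
  have hstep : ∀ n < k, (#(univ.biUnion O) * k ^ k : ℝ) - B (n + 1) ≤
      (1 - 1 / (k : ℝ)) * (#(univ.biUnion O) * k ^ k - B n) := by
    intro n hn
    have hk : (0 : ℝ) < k := by exact_mod_cast (Nat.zero_le n).trans_lt hn
    have hgain : ((#(univ.biUnion O) * k ^ k : ℝ) - B n) / k ≤ B (n + 1) - B n := by
      rw [div_le_iff₀ hk]
      have h := (Nat.cast_le (α := ℝ)).2 (pow_mul_card_add_mul_sum_le hdep hgreedy hn)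
      push_cast at h
      simp only [B]
      linarith
    linarith [show (1 - 1 / (k : ℝ)) * (#(univ.biUnion O) * k ^ k - B n) =
      (#(univ.biUnion O) * k ^ k - B n) - (#(univ.biUnion O) * k ^ k - B n) / k by ring]
  simpa [B, prefixUnion_zero, prefixUnion_self] using
    one_sub_pow_mul_le_of_sub_le_mul hq (b := B) (by simp [B, prefixUnion_zero]) hstep

end Greedy

namespace ProbabilityTheory.iIndepFun

variable {Ω ι β : Type*} [MeasurableSpace Ω] {μ : Measure Ω} [Fintype ι] [Fintype β]
  [MeasurableSpace β] [MeasurableSingletonClass β] {I : ι → Ω → β}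

theorem measure_forall_eq (hindep : iIndepFun I μ)
    (hunif : ∀ j b, μ {ω | I j ω = b} = (Fintype.card β : ENNReal)⁻¹) (v : ι → β) :
    μ {ω | ∀ j, I j ω = v j} = (Fintype.card β : ENNReal)⁻¹ ^ Fintype.card ι := by
  have h := hindep.measure_inter_preimage_eq_mul univ (sets := fun j => {v j})
    fun _ _ => measurableSet_singleton _
  convert h using 1
  · congr 1
    ext ω
    simp
  · simp only [Set.preimage, Set.mem_singleton_iff, hunif, prod_const, card_univ]

theorem exists_forall_eq (hindep : iIndepFun I μ)
    (hunif : ∀ j b, μ {ω | I j ω = b} = (Fintype.card β : ENNReal)⁻¹) (v : ι → β) :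
    ∃ ω, ∀ j, I j ω = v j :=
  nonempty_of_measure_ne_zero (μ := μ) (s := {ω | ∀ j, I j ω = v j}) <| by
    rw [hindep.measure_forall_eq hunif v]
    exact pow_ne_zero _ (ENNReal.inv_ne_zero.2 (ENNReal.natCast_ne_top _))

theorem integral_comp_eq_sum_div [DecidableEq ι] [IsFiniteMeasure μ]
    (hmeas : ∀ j, Measurable (I j)) (hindep : iIndepFun I μ)
    (hunif : ∀ j b, μ {ω | I j ω = b} = (Fintype.card β : ENNReal)⁻¹) (F : (ι → β) → ℝ) :
    ∫ ω, F (fun j => I j ω) ∂μ = (∑ v, F v) / Fintype.card β ^ Fintype.card ι := by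
  have hX : Measurable fun ω j => I j ω := measurable_pi_lambda _ hmeas
  rw [← integral_map hX.aemeasurable Measurable.of_discrete.aestronglyMeasurable,
    integral_fintype (Integrable.of_finite), sum_div]
  refine Fintype.sum_congr _ _ fun v => ?_
  have hfiber : (fun ω j => I j ω) ⁻¹' {v} = {ω | ∀ j, I j ω = v j} := by
    ext ω
    simp [funext_iff]
  rw [Measure.real, Measure.map_apply hX (measurableSet_singleton v), hfiber,
    hindep.measure_forall_eq hunif v]
  simp [div_eq_inv_mul]

end ProbabilityTheory.iIndepFun

theorem stmt_12_general {U : Type*} [DecidableEq U]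
    {Ω : Type*} [MeasurableSpace Ω] (μ : Measure Ω) [IsProbabilityMeasure μ]
    (k : ℕ) (O : Fin k → Finset U) (opt : ℕ)
    (hopt : opt = (Finset.univ.biUnion O).card)
    (I : Fin k → Ω → Fin k)
    (hImeas : ∀ j, Measurable (I j))
    (hIindep : ProbabilityTheory.iIndepFun I μ)
    (hIunif : ∀ (j : Fin k) (i : Fin k), μ {ω | I j ω = i} = 1 / k)
    (S : Fin k → Ω → Finset U)
    (hSfun : ∀ (j : Fin k) (ω ω' : Ω), (∀ i ≤ j, I i ω = I i ω') → S j ω = S j ω')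
    (hgreedy : ∀ (j : Fin k) (ω : Ω),
      ((O (I j ω) \
          (Finset.univ.filter (fun t : Fin k => t < j)).biUnion (fun t => S t ω)).card : ℕ) ≤
        ((S j ω \
          (Finset.univ.filter (fun t : Fin k => t < j)).biUnion (fun t => S t ω)).card : ℕ)) :
    (1 - (1 - 1 / (k : ℝ)) ^ k) * opt ≤
      ∫ ω, (((Finset.univ.biUnion fun j => S j ω).card : ℕ) : ℝ) ∂μ := by
  have hunif : ∀ j i, μ {ω | I j ω = i} = (Fintype.card (Fin k) : ENNReal)⁻¹ := by
    simpa using hIunif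
  choose ω₀ hω₀ using hIindep.exists_forall_eq hunif
  set s : Fin k → (Fin k → Fin k) → Finset U := fun j v => S j (ω₀ v)
  have hS : ∀ j ω, S j ω = s j fun i => I i ω :=
    fun j ω => hSfun j _ _ fun i _ => (hω₀ (fun i => I i ω) i).symm
  have hdep : ∀ j v v', (∀ i ≤ j, v i = v' i) → s j v = s j v' :=
    fun j v v' h => hSfun j _ _ fun i hi => by rw [hω₀, hω₀, h i hi]
  have hgreedy' : ∀ (j : Fin k) v, #(O (v j) \ prefixUnion (fun t => s t v) j) ≤
      #(s j v \ prefixUnion (fun t => s t v) j) := by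
    intro j v
    simpa only [filter_lt_biUnion_eq_prefixUnion, hω₀] using hgreedy j (ω₀ v)
  simp_rw [hS]
  rw [hIindep.integral_comp_eq_sum_div hImeas hunif fun v => #(univ.biUnion fun j => s j v),
    Fintype.card_fin, le_div_iff₀ (by exact_mod_cast Nat.pow_self_pos), hopt, mul_assoc]
  exact one_sub_pow_mul_card_mul_pow_le_sum hdep hgreedy'

/-- Warm-up theorem for the random-order model.  `I_1, …, I_k` are independent and
uniform on `{1,…,k}`; each `S_j` is a deterministic function of `(I_1, …, I_j)` and
covers, pointwise, at least as many new elements as `O_{I_j}` does relative to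
`C_{j-1} = S_1 ∪ ⋯ ∪ S_{j-1}`.  Then `E[|S_1 ∪ ⋯ ∪ S_k|] ≥ (1 - (1 - 1/k)^k)·opt`,
where `opt = |O_1 ∪ ⋯ ∪ O_k|`. -/
theorem stmt_12 {U : Type*} [DecidableEq U]
    {Ω : Type*} [MeasurableSpace Ω] (μ : Measure Ω) [IsProbabilityMeasure μ]
    (k : ℕ) (hk : 0 < k) (O : Fin k → Finset U) (opt : ℕ)
    (hopt : opt = (Finset.univ.biUnion O).card)
    (I : Fin k → Ω → Fin k)
    (hImeas : ∀ j, Measurable (I j))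
    (hIindep : ProbabilityTheory.iIndepFun I μ)
    (hIunif : ∀ (j : Fin k) (i : Fin k), μ {ω | I j ω = i} = 1 / k)
    (S : Fin k → Ω → Finset U)
    (hSfun : ∀ (j : Fin k) (ω ω' : Ω), (∀ i ≤ j, I i ω = I i ω') → S j ω = S j ω')
    (hgreedy : ∀ (j : Fin k) (ω : Ω),
      ((O (I j ω) \
          (Finset.univ.filter (fun t : Fin k => t < j)).biUnion (fun t => S t ω)).card : ℕ) ≤
        ((S j ω \
          (Finset.univ.filter (fun t : Fin k => t < j)).biUnion (fun t => S t ω)).card : ℕ)) :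
    (1 - (1 - 1 / (k : ℝ)) ^ k) * opt ≤
      ∫ ω, (((Finset.univ.biUnion fun j => S j ω).card : ℕ) : ℝ) ∂μ :=
  stmt_12_general μ k O opt hopt I hImeas hIindep hIunif S hSfun hgreedy
end

section
/- Let U be a finite set, let k be a positive integer, let v > 0 and α ≥ 0 be real numbers, and for A ⊆ U define u(A) = (1 − α/k)·v − |A|. Let A_0 ⊆ A_1 ⊆ ... ⊆ A_q be subsets of U such that |A_j \ A_{j−1}| ≥ v/k for every j ∈ [q]. Then u(A_q) ≤ exp(−q/k) · u(A_0). -/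
open Real Finset

/-- Since `1 - exp (-t) ≤ t`, a drop by `t * v` beats the factor `exp (-t)` as long as `y ≤ v`. -/
lemma le_exp_neg_mul_of_le_sub_mul {x y v t : ℝ} (ht : 0 ≤ t) (hv : 0 ≤ v) (hy : y ≤ v)
    (hx : x ≤ y - t * v) : x ≤ exp (-t) * y := by
  have hlow : 1 - t ≤ exp (-t) := one_sub_le_exp_neg t
  have hup : exp (-t) ≤ 1 := exp_le_one_iff.2 (neg_nonpos.2 ht)
  nlinarith [mul_nonneg (sub_nonneg.2 hy) (sub_nonneg.2 hup), mul_nonneg hv (sub_nonneg.2 hlow)]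

theorem stmt_15_general {U : Type*} [DecidableEq U]
    (k : ℕ) (v α : ℝ) (hv : 0 < v) (hα : 0 ≤ α)
    (q : ℕ) (A : ℕ → Finset U)
    (hmono : ∀ j, 1 ≤ j → j ≤ q → A (j - 1) ⊆ A j)
    (hgain : ∀ j, 1 ≤ j → j ≤ q → v / k ≤ ((A j \ A (j - 1)).card : ℝ)) :
    (1 - α / k) * v - ((A q).card : ℝ) ≤
      Real.exp (-(q : ℝ) / k) * ((1 - α / k) * v - ((A 0).card : ℝ)) := by
  set c := (1 - α / k) * v
  have hc : c ≤ v := by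
    have : 0 ≤ α / k * v := by positivity
    linarith
  have hstep : ∀ j < q, c - #(A (j + 1)) ≤ exp (-(1 / k)) * (c - #(A j)) := by
    intro j hj
    have hsub : A j ⊆ A (j + 1) := by simpa using hmono (j + 1) (by omega) hj
    have hnew : v / k ≤ #(A (j + 1) \ A j) := by simpa using hgain (j + 1) (by omega) hj
    have hcard : (#(A (j + 1)) : ℝ) = #(A (j + 1) \ A j) + #(A j) := by
      exact_mod_cast (card_sdiff_add_card_eq_card hsub).symm
    have hres : c - #(A j) ≤ v := by linarith [(#(A j)).cast_nonneg (α := ℝ)]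
    refine le_exp_neg_mul_of_le_sub_mul (by positivity) hv.le hres ?_
    rw [hcard, one_div_mul_eq_div]
    linarith
  calc c - #(A q) ≤ exp (-(1 / k)) ^ q * (c - #(A 0)) :=
        le_geom (u := fun j ↦ c - #(A j)) (exp_nonneg _) q hstep
    _ = exp (-(q : ℝ) / k) * (c - #(A 0)) := by rw [← exp_nat_mul]; ring_nf

/-- Residual decay: with `u(A) = (1 - α/k)·v - |A|`, if `A_0 ⊆ A_1 ⊆ ⋯ ⊆ A_q` and each
step adds at least `v/k` new elements, then `u(A_q) ≤ exp(-q/k)·u(A_0)`. -/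
theorem stmt_15 {U : Type*} [Fintype U] [DecidableEq U]
    (k : ℕ) (hk : 0 < k) (v α : ℝ) (hv : 0 < v) (hα : 0 ≤ α)
    (q : ℕ) (A : ℕ → Finset U)
    (hmono : ∀ j, 1 ≤ j → j ≤ q → A (j - 1) ⊆ A j)
    (hgain : ∀ j, 1 ≤ j → j ≤ q → v / k ≤ ((A j \ A (j - 1)).card : ℝ)) :
    (1 - α / k) * v - ((A q).card : ℝ) ≤
      Real.exp (-(q : ℝ) / k) * ((1 - α / k) * v - ((A 0).card : ℝ)) :=
  stmt_15_general k v α hv hα q A hmono hgain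
end
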